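/- arXiv:1805.03694 — 2 statements merged into one kernel-verified Lean document; each statement's English description precedes it below -/
import Mathlib

section
/- Let m > 0 be a real number and n ≥ 3 an integer, let x₀ ∈ ℝ^{n−1} and τ > 0. Then at every interior point (x,t) of ℝⁿ₊ (i.e. with t > 0), the function w_{x₀,τ} satisfies −τ^{m/(2(m+n−1))} · Δw_{x₀,τ}(x,t) + ((m+n−1)/(m+n−2)) · τ^{−1/2} · w_{x₀,τ}(x,t)^{(m+n)/(m+n−2)} = 0, where Δ denotes the Euclidean Laplacian in the variables (x,t). -/
open MeasureTheory Real

noncomputable section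

/-- The constant `c(m,n) = (m+n−1)/(m(m+n−2)²)`. -/
def cmn (m : ℝ) (n : ℕ) : ℝ := (m + n - 1) / (m * (m + n - 2) ^ 2)

/-- The model function
`w_{x₀,τ}(x,t) = τ^{−(n−1)(m+n−2)/(4(m+n−1))}
  [(1 + (c(m,n)/τ)^{1/2} t)² + c(m,n)|x−x₀|²/τ]^{−(m+n−2)/2}`. -/
def wModel (m : ℝ) (n : ℕ) (x₀ : EuclideanSpace ℝ (Fin (n - 1))) (τ : ℝ)
    (p : EuclideanSpace ℝ (Fin (n - 1)) × ℝ) : ℝ :=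
  τ ^ (-(((n : ℝ) - 1) * (m + n - 2)) / (4 * (m + n - 1))) *
    ((1 + (cmn m n / τ) ^ ((1 : ℝ) / 2) * p.2) ^ 2 + cmn m n * ‖p.1 - x₀‖ ^ 2 / τ) ^
      (-((m + n - 2) / 2))

/-- Second directional derivative of `w` at `p` in direction `v`. -/
def secondDeriv (n : ℕ) (w : EuclideanSpace ℝ (Fin (n - 1)) × ℝ → ℝ)
    (p v : EuclideanSpace ℝ (Fin (n - 1)) × ℝ) : ℝ :=
  fderiv ℝ (fun q => fderiv ℝ w q v) p v

/-- The Euclidean Laplacian of `w` on the half-space, computed in the coordinates `(x,t)`. -/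
def lap (n : ℕ) (w : EuclideanSpace ℝ (Fin (n - 1)) × ℝ → ℝ)
    (p : EuclideanSpace ℝ (Fin (n - 1)) × ℝ) : ℝ :=
  (∑ i : Fin (n - 1), secondDeriv n w p (EuclideanSpace.single i (1 : ℝ), 0)) +
    secondDeriv n w p (0, 1)

/-!
Write `w = C · F ^ e` with `F(x,t) = (1 + b t)² + k |x - x₀|²`, `k = c(m,n)/τ`, `b = √k` and
`e = -(m+n-2)/2`. Since `b² = k`, the gradient satisfies `|∇F|² = 4kF` and `ΔF = 2kn`, so the chain
rule gives `Δ(F ^ e) = 2ek(2e + n - 2) F ^ (e-1)`. For this `e` we have `2e + n - 2 = -m`, and the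
constant `km(m+n-2)` equals `(m+n-1)/((m+n-2)τ)` by the choice of `c(m,n)`; finally
`F ^ (e-1) = (F ^ e) ^ ((m+n)/(m+n-2))`, and the powers of `τ` match.
-/

open Filter Topology

section ChainRule

variable {E : Type*} [NormedAddCommGroup E] [NormedSpace ℝ E]

theorem fderiv_fderiv_const_mul_rpow_apply {f : E → ℝ} {f' : E → E →L[ℝ] ℝ}
    {f'' : E →L[ℝ] ℝ} {p v : E} (C e : ℝ) (hf : ∀ᶠ q in 𝓝 p, HasFDerivAt f (f' q) q)
    (hf' : HasFDerivAt (fun q => f' q v) f'' p) (hp : 0 < f p) :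
    fderiv ℝ (fun q => fderiv ℝ (fun q => C * f q ^ e) q v) p v =
      C * e * ((e - 1) * f p ^ (e - 2) * f' p v ^ 2 + f p ^ (e - 1) * f'' v) := by
  have hpos : ∀ᶠ q in 𝓝 p, 0 < f q := hf.self_of_nhds.continuousAt.eventually (lt_mem_nhds hp)
  have hfirst : (fun q => fderiv ℝ (fun q => C * f q ^ e) q v) =ᶠ[𝓝 p]
      fun q => C * e * (f q ^ (e - 1) * f' q v) := by
    filter_upwards [hf, hpos] with q hq hq0
    rw [((hq.rpow_const (Or.inl hq0.ne')).const_mul C).fderiv]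
    simp only [smul_apply, smul_eq_mul]
    ring
  have hpow : HasFDerivAt (fun q => f q ^ (e - 1)) (((e - 1) * f p ^ (e - 1 - 1)) • f' p) p :=
    hf.self_of_nhds.rpow_const (Or.inl hp.ne')
  rw [hfirst.fderiv_eq, ((hpow.fun_mul hf').const_mul (C * e)).fderiv]
  simp only [show e - 1 - 1 = e - 2 by ring, smul_add, add_apply, smul_apply, smul_eq_mul]
  ring

end ChainRule

section Base

variable {E : Type*} [NormedAddCommGroup E] [InnerProductSpace ℝ E] (b k : ℝ) (x₀ : E)

def wBase (p : E × ℝ) : ℝ := (1 + b * p.2) ^ 2 + k * ‖p.1 - x₀‖ ^ 2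

def wBaseDeriv (q : E × ℝ) : E × ℝ →L[ℝ] ℝ :=
  (2 * b * (1 + b * q.2)) • ContinuousLinearMap.snd ℝ E ℝ +
    (2 * k) • (innerSL ℝ (q.1 - x₀)).comp (ContinuousLinearMap.fst ℝ E ℝ)

@[simp]
theorem wBaseDeriv_apply (q v : E × ℝ) :
    wBaseDeriv b k x₀ q v = 2 * b * (1 + b * q.2) * v.2 + 2 * k * inner ℝ (q.1 - x₀) v.1 := by
  simp [wBaseDeriv, inner_sub_left]

theorem hasFDerivAt_wBase (q : E × ℝ) : HasFDerivAt (wBase b k x₀) (wBaseDeriv b k x₀ q) q := by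
  have h1 := (((hasFDerivAt_snd (𝕜 := ℝ) (p := q)).const_mul b).const_add 1).pow 2
  have h2 := ((hasFDerivAt_fst (𝕜 := ℝ) (p := q)).sub_const x₀).norm_sq.const_mul k
  refine (h1.fun_add h2).congr_fderiv (ContinuousLinearMap.ext fun v => ?_)
  simp only [wBaseDeriv_apply, add_apply, smul_apply, ContinuousLinearMap.coe_snd',
    ContinuousLinearMap.comp_apply, ContinuousLinearMap.coe_fst', coe_innerSL_apply, smul_eq_mul,
    nsmul_eq_mul, Nat.add_one_sub_one, pow_one, Nat.cast_ofNat]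
  ring

theorem hasFDerivAt_wBaseDeriv_apply (q v : E × ℝ) :
    HasFDerivAt (fun y => wBaseDeriv b k x₀ y v)
      ((2 * b * b * v.2) • ContinuousLinearMap.snd ℝ E ℝ +
        (2 * k) • (innerSL ℝ v.1).comp (ContinuousLinearMap.fst ℝ E ℝ)) q := by
  have h1 := (((hasFDerivAt_snd (𝕜 := ℝ) (p := q)).const_mul b).const_add 1).const_mul (2 * b)
  have h2 := ((hasFDerivAt_fst (𝕜 := ℝ) (p := q)).sub_const x₀).inner ℝ (hasFDerivAt_const v.1 q)
  refine ((h1.mul_const v.2).fun_add (h2.const_mul (2 * k))).congr_fderiv ?_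
  refine ContinuousLinearMap.ext fun w => ?_
  simp only [add_apply, smul_apply, ContinuousLinearMap.coe_snd', ContinuousLinearMap.comp_apply,
    ContinuousLinearMap.coe_fst', coe_innerSL_apply, smul_eq_mul, fderivInnerCLM_apply,
    ContinuousLinearMap.prod_apply, zero_apply, inner_zero_right, real_inner_comm]
  ring

theorem fderiv_fderiv_const_mul_rpow_wBase_apply (C e : ℝ) {p : E × ℝ} (v : E × ℝ)
    (hp : 0 < wBase b k x₀ p) :
    fderiv ℝ (fun q => fderiv ℝ (fun q => C * wBase b k x₀ q ^ e) q v) p v =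
      C * e * ((e - 1) * wBase b k x₀ p ^ (e - 2) * wBaseDeriv b k x₀ p v ^ 2 +
        wBase b k x₀ p ^ (e - 1) * (2 * b * b * v.2 ^ 2 + 2 * k * ‖v.1‖ ^ 2)) := by
  rw [fderiv_fderiv_const_mul_rpow_apply C e (.of_forall (hasFDerivAt_wBase b k x₀))
    (hasFDerivAt_wBaseDeriv_apply b k x₀ p v) hp]
  simp only [add_apply, smul_apply, ContinuousLinearMap.coe_snd', ContinuousLinearMap.comp_apply,
    ContinuousLinearMap.coe_fst', coe_innerSL_apply, real_inner_self_eq_norm_sq, smul_eq_mul]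
  ring

end Base

theorem lap_const_mul_rpow_wBase (n : ℕ) {b k : ℝ} (hbk : b * b = k)
    (x₀ : EuclideanSpace ℝ (Fin (n - 1))) (C e : ℝ) {p : EuclideanSpace ℝ (Fin (n - 1)) × ℝ}
    (hp : 0 < wBase b k x₀ p) :
    lap n (fun q => C * wBase b k x₀ q ^ e) p =
      2 * C * e * k * (2 * e + ((n - 1 : ℕ) : ℝ) - 1) * wBase b k x₀ p ^ (e - 1) := by
  have hF : wBase b k x₀ p ^ (e - 1) = wBase b k x₀ p ^ (e - 2) * wBase b k x₀ p := by
    rw [← Real.rpow_add_one hp.ne']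
    ring_nf
  have hnorm : ∑ i, (p.1 - x₀) i ^ 2 = ‖p.1 - x₀‖ ^ 2 := (EuclideanSpace.real_norm_sq_eq _).symm
  simp only [lap, secondDeriv, fderiv_fderiv_const_mul_rpow_wBase_apply _ _ _ _ _ _ hp,
    wBaseDeriv_apply, EuclideanSpace.inner_single_right, PiLp.norm_single, inner_zero_right,
    norm_zero, norm_one, ringHom_apply, mul_zero, one_mul, zero_add, add_zero, mul_one, mul_pow,
    zero_pow two_ne_zero, one_pow, Finset.sum_add_distrib, ← Finset.mul_sum, hnorm,
    Finset.sum_const, Finset.card_univ, Fintype.card_fin, nsmul_eq_mul, hF]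
  have hFdef : wBase b k x₀ p = (1 + b * p.2) ^ 2 + k * ‖p.1 - x₀‖ ^ 2 := rfl
  set F := wBase b k x₀ p
  set G := F ^ (e - 2)
  linear_combination (4 * C * e * (e - 1) * G * (1 + b * p.2) ^ 2 + 2 * C * e * G * F) * hbk -
    4 * C * e * (e - 1) * G * k * hFdef

theorem mul_mul_cmn {m : ℝ} {n : ℕ} (hm : m ≠ 0) (hmn : m + n - 2 ≠ 0) :
    m * (m + n - 2) * cmn m n = (m + n - 1) / (m + n - 2) := by
  unfold cmn
  field_simp

theorem wModel_prefactor_rpow {τ : ℝ} (hτ : 0 < τ) {m N : ℝ} (h₁ : m + N - 1 ≠ 0)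
    (h₂ : m + N - 2 ≠ 0) :
    τ ^ (m / (2 * (m + N - 1))) * τ ^ (-((N - 1) * (m + N - 2)) / (4 * (m + N - 1))) / τ =
      τ ^ (-(1 : ℝ) / 2) * (τ ^ (-((N - 1) * (m + N - 2)) / (4 * (m + N - 1)))) ^
        ((m + N) / (m + N - 2)) := by
  rw [← Real.rpow_mul hτ.le, ← Real.rpow_add hτ, ← Real.rpow_add hτ, ← Real.rpow_sub_one hτ.ne']
  congr 1
  field_simp
  ring

theorem wModel_eq (m : ℝ) (n : ℕ) (x₀ : EuclideanSpace ℝ (Fin (n - 1))) (τ : ℝ) :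
    wModel m n x₀ τ = fun q => τ ^ (-(((n : ℝ) - 1) * (m + n - 2)) / (4 * (m + n - 1))) *
      wBase ((cmn m n / τ) ^ (1 / 2 : ℝ)) (cmn m n / τ) x₀ q ^ (-((m + n - 2) / 2)) := by
  ext q
  rw [wModel, wBase, mul_div_right_comm]

theorem wModel_interior_equation (m : ℝ) (hm : 0 < m) (n : ℕ) (hn : 3 ≤ n)
    (x₀ : EuclideanSpace ℝ (Fin (n - 1))) (τ : ℝ) (hτ : 0 < τ)
    (x : EuclideanSpace ℝ (Fin (n - 1))) (t : ℝ) (ht : 0 < t) :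
    -τ ^ (m / (2 * (m + n - 1))) * lap n (wModel m n x₀ τ) (x, t) +
        ((m + n - 1) / (m + n - 2)) * τ ^ (-(1 : ℝ) / 2) *
          wModel m n x₀ τ (x, t) ^ ((m + n) / (m + n - 2)) = 0 := by
  have hn' : (3 : ℝ) ≤ n := by exact_mod_cast hn
  have hmn : 0 < m + n - 2 := by linarith
  have hk : 0 < cmn m n / τ := div_pos (div_pos (by linarith) (by positivity)) hτ
  set k := cmn m n / τ
  set b := k ^ (1 / 2 : ℝ)
  have hbk : b * b = k := by rw [← Real.rpow_add hk]; norm_num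
  have hp : 0 < wBase b k x₀ (x, t) := by unfold wBase; positivity
  set C := τ ^ (-(((n : ℝ) - 1) * (m + n - 2)) / (4 * (m + n - 1)))
  set e : ℝ := -((m + n - 2) / 2)
  have hcoef : 2 * e * k * (2 * e + (n - 1) - 1) = (m + n - 1) / (m + n - 2) / τ := by
    rw [← mul_mul_cmn hm.ne' hmn.ne']
    ring
  have hexp : e * ((m + n) / (m + n - 2)) = e - 1 := by
    simp only [e]
    field_simp
    ring
  rw [wModel_eq, lap_const_mul_rpow_wBase n hbk x₀ C e hp, Nat.cast_pred (by omega),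
    Real.mul_rpow (by positivity) (by positivity), ← Real.rpow_mul hp.le, hexp]
  linear_combination (-(τ ^ (m / (2 * (m + n - 1))) * C * wBase b k x₀ (x, t) ^ (e - 1))) * hcoef
    - (m + n - 1) / (m + n - 2) * wBase b k x₀ (x, t) ^ (e - 1) *
      wModel_prefactor_rpow hτ (m := m) (N := n) (by linarith) (by linarith)
end
end

section
/- Let m > 0 be a real number and n ≥ 3 an integer. There exists a constant C > 0 depending only on m and n such that for every ε ∈ (0,1] and every τ ∈ (0, c(m,n)·ε²], one has ∫_{{x ∈ ℝ^{n−1} : |x| ≥ ε}} w_{0,τ}(x,0)^{2(m+n−1)/(m+n−2)} dx ≤ C · ε^{1−n−2m} · τ^{m+(n−1)/2}. -/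
/-!
On the boundary `t = 0` the critical power of the model function is explicit:
`w^{2(m+n-1)/(m+n-2)} = τ^{-(n-1)/2} (1 + c|x|²/τ)^{-(m+n-1)}`. Dropping the `1` bounds it by
`c^{-(m+n-1)} τ^{m+(n-1)/2} |x|^{-2(m+n-1)}`, and since `2(m+n-1) > n-1` the integral of
`|x|^{-2(m+n-1)}` over `{|x| ≥ ε}` is finite and, in polar coordinates, a constant multiple of
`ε^{(n-1)-2(m+n-1)} = ε^{1-n-2m}`.
-/

open MeasureTheory Real

noncomputable section

open Set Metric

lemma indicator_tail_norm_rpow_neg {E : Type*} [Norm E] (ε s : ℝ) :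
    {x : E | ε ≤ ‖x‖}.indicator (fun x ↦ ‖x‖ ^ (-s)) =
      fun x ↦ (Ici ε).indicator (fun r : ℝ ↦ r ^ (-s)) ‖x‖ := by
  ext x
  by_cases h : ε ≤ ‖x‖ <;> simp [h]

lemma pow_smul_indicator_Ici_rpow_neg (ε s : ℝ) (k : ℕ) :
    EqOn (fun y : ℝ ↦ y ^ k • (Ici ε).indicator (fun r ↦ r ^ (-s)) y)
      ((Ici ε).indicator fun y ↦ y ^ ((k : ℝ) - s)) (Ioi 0) := by
  intro y (hy : 0 < y)
  by_cases h : y ∈ Ici ε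
  · simp only [indicator_of_mem h, smul_eq_mul]
    rw [← rpow_natCast, ← rpow_add hy, sub_eq_add_neg]
  · simp [indicator_of_notMem h]

lemma cast_finrank_sub_one (E : Type*) [AddCommGroup E] [Module ℝ E] [Nontrivial E]
    [FiniteDimensional ℝ E] :
    ((Module.finrank ℝ E - 1 : ℕ) : ℝ) = Module.finrank ℝ E - 1 := by
  rw [Nat.cast_sub Module.finrank_pos, Nat.cast_one]

section RadialTail

variable {E : Type*} [NormedAddCommGroup E] [NormedSpace ℝ E] [Nontrivial E]
  [FiniteDimensional ℝ E] [MeasurableSpace E] [BorelSpace E]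
  (μ : Measure E) [μ.IsAddHaarMeasure] {s ε : ℝ}

lemma integrableOn_norm_rpow_neg_tail (hs : (Module.finrank ℝ E : ℝ) < s) (hε : 0 < ε) :
    IntegrableOn (fun x : E ↦ ‖x‖ ^ (-s)) {x | ε ≤ ‖x‖} μ := by
  rw [← integrable_indicator_iff (measurableSet_le measurable_const measurable_norm),
    indicator_tail_norm_rpow_neg, integrable_fun_norm_addHaar,
    integrableOn_congr_fun (pow_smul_indicator_Ici_rpow_neg _ _ _) measurableSet_Ioi,
    IntegrableOn, integrable_indicator_iff measurableSet_Ici, IntegrableOn,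
    Measure.restrict_restrict measurableSet_Ici, inter_eq_left.2 (Ici_subset_Ioi.2 hε),
    ← IntegrableOn, integrableOn_Ici_iff_integrableOn_Ioi]
  exact integrableOn_Ioi_rpow_of_lt (by rw [cast_finrank_sub_one E]; linarith) hε

lemma setIntegral_norm_rpow_neg_tail (hs : (Module.finrank ℝ E : ℝ) < s) (hε : 0 < ε) :
    ∫ x in {x : E | ε ≤ ‖x‖}, ‖x‖ ^ (-s) ∂μ =
      Module.finrank ℝ E * μ.real (ball 0 1) *
        (ε ^ ((Module.finrank ℝ E : ℝ) - s) / (s - Module.finrank ℝ E)) := by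
  rw [← integral_indicator (measurableSet_le measurable_const measurable_norm),
    indicator_tail_norm_rpow_neg, integral_fun_norm_addHaar,
    setIntegral_congr_fun measurableSet_Ioi (pow_smul_indicator_Ici_rpow_neg _ _ _),
    integral_indicator measurableSet_Ici, Measure.restrict_restrict measurableSet_Ici,
    inter_eq_left.2 (Ici_subset_Ioi.2 hε), integral_Ici_eq_integral_Ioi, cast_finrank_sub_one E,
    integral_Ioi_rpow_of_lt (by linarith) hε, nsmul_eq_mul, smul_eq_mul,
    show (Module.finrank ℝ E : ℝ) - 1 - s + 1 = -(s - Module.finrank ℝ E) by ring,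
    neg_div_neg_eq, neg_sub, mul_assoc]

end RadialTail

section Model

variable {m : ℝ} {n : ℕ}

lemma cmn_pos (hm : 0 < m) (hn : 2 ≤ n) : 0 < cmn m n := by
  have hn' : (2 : ℝ) ≤ n := by exact_mod_cast hn
  exact div_pos (by linarith) (mul_pos hm (pow_pos (by linarith) 2))

lemma wModel_boundary_rpow (hm : 0 < m) (hn : 2 ≤ n) {τ : ℝ} (hτ : 0 < τ)
    (x₀ x : EuclideanSpace ℝ (Fin (n - 1))) :
    wModel m n x₀ τ (x, 0) ^ (2 * (m + n - 1) / (m + n - 2)) =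
      τ ^ (-(((n : ℝ) - 1) / 2)) * (1 + cmn m n * ‖x - x₀‖ ^ 2 / τ) ^ (-(m + n - 1)) := by
  have hn' : (2 : ℝ) ≤ n := by exact_mod_cast hn
  have hbase : 0 ≤ 1 + cmn m n * ‖x - x₀‖ ^ 2 / τ := by
    have := cmn_pos hm hn
    positivity
  have h2 : m + n - 2 ≠ 0 := by linarith
  have h1 : m + n - 1 ≠ 0 := by linarith
  simp only [wModel, mul_zero, add_zero, one_pow]
  rw [mul_rpow (rpow_nonneg hτ.le _) (rpow_nonneg hbase _), ← rpow_mul hτ.le,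
    ← rpow_mul hbase]
  congr 2
  · field_simp
    ring
  · field_simp

lemma wModel_boundary_rpow_le (hm : 0 < m) (hn : 2 ≤ n) {τ : ℝ} (hτ : 0 < τ)
    {x₀ x : EuclideanSpace ℝ (Fin (n - 1))} (hx : x ≠ x₀) :
    wModel m n x₀ τ (x, 0) ^ (2 * (m + n - 1) / (m + n - 2)) ≤
      cmn m n ^ (-(m + n - 1)) * τ ^ (m + ((n : ℝ) - 1) / 2) *
        ‖x - x₀‖ ^ (-(2 * (m + n - 1))) := by
  have hn' : (2 : ℝ) ≤ n := by exact_mod_cast hn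
  have hc := cmn_pos hm hn
  have hr : 0 < ‖x - x₀‖ := norm_pos_iff.2 (sub_ne_zero.2 hx)
  have ha : 0 < cmn m n * ‖x - x₀‖ ^ 2 / τ := by positivity
  rw [wModel_boundary_rpow hm hn hτ]
  calc τ ^ (-(((n : ℝ) - 1) / 2)) * (1 + cmn m n * ‖x - x₀‖ ^ 2 / τ) ^ (-(m + n - 1))
      ≤ τ ^ (-(((n : ℝ) - 1) / 2)) * (cmn m n * ‖x - x₀‖ ^ 2 / τ) ^ (-(m + n - 1)) :=
        mul_le_mul_of_nonneg_left
          (rpow_le_rpow_of_nonpos ha (by linarith) (by linarith)) (rpow_nonneg hτ.le _)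
    _ = cmn m n ^ (-(m + n - 1)) * (τ ^ (-(((n : ℝ) - 1) / 2)) * τ ^ (m + n - 1)) *
          (‖x - x₀‖ ^ (2 : ℝ)) ^ (-(m + n - 1)) := by
        rw [mul_div_right_comm, mul_rpow (by positivity) (by positivity),
          div_rpow hc.le hτ.le, rpow_neg hτ.le (m + n - 1), div_inv_eq_mul,
          ← rpow_natCast _ 2, Nat.cast_ofNat]
        ring
    _ = cmn m n ^ (-(m + n - 1)) * τ ^ (m + ((n : ℝ) - 1) / 2) *
          ‖x - x₀‖ ^ (-(2 * (m + n - 1))) := by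
        rw [← rpow_add hτ, ← rpow_mul hr.le]
        ring_nf

lemma cast_finrank_euclideanSpace_fin_sub_one (hn : 2 ≤ n) :
    (Module.finrank ℝ (EuclideanSpace ℝ (Fin (n - 1))) : ℝ) = n - 1 := by
  rw [finrank_euclideanSpace_fin, Nat.cast_sub (by omega), Nat.cast_one]

lemma finrank_lt_wModel_tail_exponent (hm : 0 < m) (hn : 2 ≤ n) :
    (Module.finrank ℝ (EuclideanSpace ℝ (Fin (n - 1))) : ℝ) < 2 * (m + n - 1) := by
  have hn' : (2 : ℝ) ≤ n := by exact_mod_cast hn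
  rw [cast_finrank_euclideanSpace_fin_sub_one hn]
  linarith

lemma setIntegral_wModel_boundary_rpow_le (hm : 0 < m) (hn : 2 ≤ n) {τ ε : ℝ} (hτ : 0 < τ)
    (hε : 0 < ε) :
    ∫ x in {x : EuclideanSpace ℝ (Fin (n - 1)) | ε ≤ ‖x‖},
        wModel m n 0 τ (x, 0) ^ (2 * (m + n - 1) / (m + n - 2)) ≤
      cmn m n ^ (-(m + n - 1)) * τ ^ (m + ((n : ℝ) - 1) / 2) *
        ∫ x in {x : EuclideanSpace ℝ (Fin (n - 1)) | ε ≤ ‖x‖}, ‖x‖ ^ (-(2 * (m + n - 1))) := by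
  have : NeZero (n - 1) := ⟨by omega⟩
  have hc := cmn_pos hm hn
  rw [← integral_const_mul]
  refine integral_mono_of_nonneg (Filter.Eventually.of_forall fun x ↦ ?_)
    ((integrableOn_norm_rpow_neg_tail volume (finrank_lt_wModel_tail_exponent hm hn) hε).const_mul
      _) ?_
  · simp only [Pi.zero_apply, wModel_boundary_rpow hm hn hτ]
    positivity
  · filter_upwards [ae_restrict_mem (measurableSet_le measurable_const measurable_norm)]
      with x (hx : ε ≤ ‖x‖)
    simpa using wModel_boundary_rpow_le hm hn hτ (x₀ := 0) (norm_pos_iff.1 (hε.trans_le hx))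

end Model

theorem wModel_boundary_tail_estimate (m : ℝ) (hm : 0 < m) (n : ℕ) (hn : 3 ≤ n) :
    ∃ C : ℝ, 0 < C ∧ ∀ ε : ℝ, 0 < ε → ε ≤ 1 → ∀ τ : ℝ, 0 < τ → τ ≤ cmn m n * ε ^ 2 →
      (∫ x in {x : EuclideanSpace ℝ (Fin (n - 1)) | ε ≤ ‖x‖},
          wModel m n 0 τ (x, (0 : ℝ)) ^ (2 * (m + n - 1) / (m + n - 2))) ≤
        C * ε ^ (1 - (n : ℝ) - 2 * m) * τ ^ (m + ((n : ℝ) - 1) / 2) := by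
  have : NeZero (n - 1) := ⟨by omega⟩
  have hn2 : 2 ≤ n := by omega
  have hn' : (3 : ℝ) ≤ n := by exact_mod_cast hn
  have hc := cmn_pos hm hn2
  have hV : 0 < volume.real (ball (0 : EuclideanSpace ℝ (Fin (n - 1))) 1) :=
    ENNReal.toReal_pos (measure_ball_pos _ _ one_pos).ne' measure_ball_lt_top.ne
  refine ⟨cmn m n ^ (-(m + n - 1)) *
    ((n - 1) * volume.real (ball (0 : EuclideanSpace ℝ (Fin (n - 1))) 1) /
    (2 * (m + n - 1) - (n - 1))), ?_, ?_⟩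
  · have : 0 < 2 * (m + n - 1) - (n - 1) := by linarith
    have : (0 : ℝ) < n - 1 := by linarith
    positivity
  intro ε hε _ τ hτ _
  calc _ ≤ _ := setIntegral_wModel_boundary_rpow_le hm hn2 hτ hε
    _ = _ := by
      rw [setIntegral_norm_rpow_neg_tail volume (finrank_lt_wModel_tail_exponent hm hn2) hε,
        cast_finrank_euclideanSpace_fin_sub_one hn2,
        show (n : ℝ) - 1 - 2 * (m + n - 1) = 1 - n - 2 * m by ring]
      ring
end
end
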